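/- In the graph G' constructed from G as above (k copies of each vertex, with classes 1,...,k−1 connected by the edge pattern of G and class k matched to the copies of each vertex), there exists a maximum independent set I' such that for every vertex v of G, either all copies (v,i) with i ≠ k belong to I', or (v,k) belongs to I'. -/

import Mathlib

open Finset

/-- The maximum size of an independent set of `G`. -/
noncomputable def indepNum {V : Type*} [Fintype V] (G : SimpleGraph V) : ℕ :=
  sSup {n | ∃ s : Finset V, (∀ u ∈ s, ∀ w ∈ s, ¬ G.Adj u w) ∧ s.card = n}

/-- The `k`-layered graph `G'` built from `G`: vertices are `V × Fin k`; each class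
`V × {i}` is independent; for `i ≠ j` both different from the last class, `(u,i)` is
adjacent to `(v,j)` iff `u ~ v` in `G`; the last class is joined to each other class by
a perfect matching on the copies of each vertex. -/
def layered {V : Type*} (G : SimpleGraph V) (k : ℕ) : SimpleGraph (V × Fin k) where
  Adj a b := a.2 ≠ b.2 ∧
    ((a.2.val < k - 1 ∧ b.2.val < k - 1 ∧ G.Adj a.1 b.1) ∨
     ((a.2.val = k - 1 ∨ b.2.val = k - 1) ∧ a.1 = b.1))
  symm := by
    constructor
    rintro ⟨u, i⟩ ⟨v, j⟩ ⟨hne, h⟩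
    refine ⟨hne.symm, ?_⟩
    rcases h with ⟨hi, hj, hadj⟩ | ⟨hij, huv⟩
    · exact Or.inl ⟨hj, hi, hadj.symm⟩
    · exact Or.inr ⟨hij.symm, huv.symm⟩
  loopless := by constructor; rintro ⟨u, i⟩ ⟨h, _⟩; exact h rfl

/-!
The independence number of `G'` is `|V| + α(G) (k - 2)`, with `α(G)` that of `G`. A maximum
independent set `S` of `G` lifts to the independent set made of the non-last copies of the
vertices of `S` and the last copies of all other vertices; it has this size and the required
shape. Conversely, in an independent set `J` of `G'` a vertex with at least two copies in `J`
cannot have its last copy in `J`, so it has at most `k - 1` copies there; these vertices are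
independent in `G`, since two of their copies in distinct non-last layers would be adjacent,
and every other vertex has at most one copy in `J`.
-/

section indepNum

variable {V : Type*} (G : SimpleGraph V)

def IsIndep (s : Finset V) : Prop :=
  ∀ u ∈ s, ∀ w ∈ s, ¬ G.Adj u w

lemma nonempty_indepCards :
    {n | ∃ s : Finset V, IsIndep G s ∧ s.card = n}.Nonempty :=
  ⟨0, ∅, by simp [IsIndep], rfl⟩

variable [Fintype V]

lemma bddAbove_indepCards :
    BddAbove {n | ∃ s : Finset V, IsIndep G s ∧ s.card = n} :=
  ⟨Fintype.card V, by rintro n ⟨s, -, rfl⟩; exact s.card_le_univ⟩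

lemma card_le_indepNum (s : Finset V) (hs : IsIndep G s) :
    s.card ≤ indepNum G :=
  le_csSup (bddAbove_indepCards G) ⟨s, hs, rfl⟩

lemma indepNum_le {m : ℕ} (h : ∀ s : Finset V, IsIndep G s → s.card ≤ m) :
    indepNum G ≤ m :=
  csSup_le (nonempty_indepCards G) (by rintro n ⟨s, hs, rfl⟩; exact h s hs)

lemma exists_card_eq_indepNum :
    ∃ s : Finset V, IsIndep G s ∧ s.card = indepNum G :=
  Nat.sSup_mem (nonempty_indepCards G) (bddAbove_indepCards G)

end indepNum

namespace Layered

variable {V : Type*} {G : SimpleGraph V} {k : ℕ} {last : Fin k}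

lemma adj_iff (hlast : (last : ℕ) = k - 1) {u v : V} {i j : Fin k} :
    (layered G k).Adj (u, i) (v, j) ↔
      i ≠ j ∧ ((i ≠ last ∧ j ≠ last ∧ G.Adj u v) ∨ ((i = last ∨ j = last) ∧ u = v)) := by
  have hlt : ∀ i : Fin k, (i : ℕ) < k - 1 ↔ i ≠ last := fun i => by
    rw [Ne, Fin.ext_iff, hlast]; omega
  simp only [layered, hlt, Fin.ext_iff, hlast]

variable [DecidableEq V]

lemma layer_ne_last_of_two_le_card_fiber (hlast : (last : ℕ) = k - 1)
    {J : Finset (V × Fin k)} (hJ : IsIndep (layered G k) J) {v : V}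
    (h2 : 2 ≤ (J.filter (·.1 = v)).card) {a : V × Fin k} (ha : a ∈ J) (hav : a.1 = v) :
    a.2 ≠ last := by
  intro hal
  obtain ⟨b, hb, hba⟩ := exists_mem_ne h2 a
  rw [mem_filter] at hb
  have hab : a.1 = b.1 := hav.trans hb.2.symm
  have hlayer : a.2 ≠ b.2 := fun h => hba (Prod.ext hab h).symm
  exact hJ a ha b hb.1 ((adj_iff hlast).2 ⟨hlayer, Or.inr ⟨Or.inl hal, hab⟩⟩)

lemma card_fiber_le_of_two_le (hlast : (last : ℕ) = k - 1)
    {J : Finset (V × Fin k)} (hJ : IsIndep (layered G k) J) {v : V}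
    (h2 : 2 ≤ (J.filter (·.1 = v)).card) :
    (J.filter (·.1 = v)).card ≤ k - 1 := by
  calc (J.filter (·.1 = v)).card ≤ (univ.erase last).card := by
        refine card_le_card_of_injOn Prod.snd (fun a ha => ?_) (fun a ha b hb hab => ?_)
        · rw [mem_coe, mem_filter] at ha
          simpa using layer_ne_last_of_two_le_card_fiber hlast hJ h2 ha.1 ha.2
        · rw [mem_coe, mem_filter] at ha hb
          exact Prod.ext (ha.2.trans hb.2.symm) hab
    _ = k - 1 := by simp

variable [Fintype V]

def liftSet (last : Fin k) (S : Finset V) : Finset (V × Fin k) :=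
  S ×ˢ univ.erase last ∪ Sᶜ ×ˢ {last}

lemma mem_liftSet {S : Finset V} {v : V} {i : Fin k} :
    (v, i) ∈ liftSet last S ↔ (v ∈ S ↔ i ≠ last) := by
  by_cases hv : v ∈ S <;> simp [liftSet, hv, eq_comm]

lemma liftSet_isIndep (hlast : (last : ℕ) = k - 1) {S : Finset V}
    (hS : IsIndep G S) :
    IsIndep (layered G k) (liftSet last S) := by
  rintro ⟨u, i⟩ hu ⟨v, j⟩ hv hadj
  rw [mem_liftSet] at hu hv
  obtain ⟨hij, ⟨hi, hj, huv⟩ | ⟨hlast', rfl⟩⟩ := (adj_iff hlast).1 hadj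
  · exact hS u (hu.2 hi) v (hv.2 hj) huv
  · have : i = last ∧ j = last := by tauto
    exact hij (this.1.trans this.2.symm)

lemma card_liftSet (hk : 2 ≤ k) (S : Finset V) :
    (liftSet last S).card = Fintype.card V + S.card * (k - 2) := by
  have hdisj : Disjoint (S ×ˢ univ.erase last) (Sᶜ ×ˢ {last}) :=
    disjoint_product.2 (Or.inl disjoint_compl_right)
  rw [liftSet, card_union_of_disjoint hdisj, card_product, card_product, card_erase_of_mem
    (mem_univ _), card_compl, card_univ, Fintype.card_fin, card_singleton, mul_one]
  obtain ⟨m, rfl⟩ : ∃ m, k = m + 2 := ⟨k - 2, by omega⟩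
  have := S.card_le_univ
  simp only [Nat.add_sub_cancel, Nat.add_succ_sub_one, Nat.mul_succ]
  omega

def heavy (J : Finset (V × Fin k)) : Finset V :=
  univ.filter fun v => 2 ≤ (J.filter (·.1 = v)).card

lemma heavy_isIndep (hlast : (last : ℕ) = k - 1)
    {J : Finset (V × Fin k)} (hJ : IsIndep (layered G k) J) :
    IsIndep G (heavy J) := by
  intro u hu w hw huw
  simp only [heavy, mem_filter, mem_univ, true_and] at hu hw
  obtain ⟨a, ha, b, hb, hab⟩ := one_lt_card.1 hu
  obtain ⟨c, hc⟩ := card_pos.1 (by omega : 0 < (J.filter (·.1 = w)).card)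
  rw [mem_filter] at ha hb hc
  have hc_last := layer_ne_last_of_two_le_card_fiber hlast hJ hw hc.1 hc.2
  have h_indep : ∀ x ∈ J, x.1 = u → x.2 ≠ c.2 → False := fun x hx hxu hxc =>
    hJ x hx c hc.1 <| (adj_iff hlast).2 ⟨hxc, Or.inl
      ⟨layer_ne_last_of_two_le_card_fiber hlast hJ hu hx hxu, hc_last, hxu ▸ hc.2 ▸ huw⟩⟩
  -- `a` and `b` lie in different layers, so one of them is not in the layer of `c`
  by_cases hac : a.2 = c.2
  · exact h_indep b hb.1 hb.2 fun hbc =>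
      hab (Prod.ext (ha.2.trans hb.2.symm) (hac.trans hbc.symm))
  · exact h_indep a ha.1 ha.2 hac

lemma card_le_of_isIndep (hk : 2 ≤ k) {J : Finset (V × Fin k)}
    (hJ : IsIndep (layered G k) J) :
    J.card ≤ Fintype.card V + indepNum G * (k - 2) := by
  have hlast : ((⟨k - 1, by omega⟩ : Fin k) : ℕ) = k - 1 := rfl
  have hfiber (v : V) : (J.filter (·.1 = v)).card ≤ 1 + if v ∈ heavy J then k - 2 else 0 := by
    by_cases hv : v ∈ heavy J
    · have := card_fiber_le_of_two_le hlast hJ (mem_filter.1 hv).2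
      rw [if_pos hv]
      omega
    · simp only [heavy, mem_filter, mem_univ, true_and] at hv
      omega
  calc J.card = ∑ v, (J.filter (·.1 = v)).card :=
        card_eq_sum_card_fiberwise fun a _ => mem_univ a.1
    _ ≤ ∑ v, (1 + if v ∈ heavy J then k - 2 else 0) := sum_le_sum fun v _ => hfiber v
    _ = Fintype.card V + (heavy J).card * (k - 2) := by simp [sum_add_distrib]
    _ ≤ Fintype.card V + indepNum G * (k - 2) := by
        gcongr
        exact card_le_indepNum G _ (heavy_isIndep hlast hJ)

end Layered

open Layered

theorem indepNum_layered {V : Type*} [Fintype V] [DecidableEq V] (G : SimpleGraph V) {k : ℕ}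
    (hk : 2 ≤ k) : indepNum (layered G k) = Fintype.card V + indepNum G * (k - 2) := by
  refine le_antisymm (indepNum_le _ fun J hJ => card_le_of_isIndep hk hJ) ?_
  obtain ⟨S, hS, hcard⟩ := exists_card_eq_indepNum G
  rw [← hcard, ← card_liftSet (last := ⟨k - 1, by omega⟩) hk]
  exact card_le_indepNum _ _ (liftSet_isIndep rfl hS)

/-- In the `k`-layered graph `G'` (`k > 2`) there is a maximum independent set `I'`
such that for every vertex `v` of `G`, either all copies `(v,i)` with `i` not in the
last class belong to `I'`, or the last-class copy of `v` belongs to `I'`. -/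
theorem layered_exists_structured_MIS {V : Type*} [Fintype V] [DecidableEq V]
    (G : SimpleGraph V) (k : ℕ) (hk : 2 < k) :
    ∃ I' : Finset (V × Fin k),
      (∀ a ∈ I', ∀ b ∈ I', ¬ (layered G k).Adj a b) ∧
      I'.card = indepNum (layered G k) ∧
      ∀ v : V, (∀ i : Fin k, i.val ≠ k - 1 → (v, i) ∈ I') ∨
        (v, (⟨k - 1, by omega⟩ : Fin k)) ∈ I' := by
  obtain ⟨S, hS, hcard⟩ := exists_card_eq_indepNum G
  refine ⟨liftSet ⟨k - 1, by omega⟩ S, liftSet_isIndep rfl hS, ?_, fun v => ?_⟩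
  · rw [card_liftSet hk.le, indepNum_layered G hk.le, hcard]
  · by_cases hv : v ∈ S
    · exact Or.inl fun i hi => mem_liftSet.2 (iff_of_true hv (Fin.ne_of_val_ne hi))
    · exact Or.inr (mem_liftSet.2 (iff_of_false hv (not_not.2 rfl)))
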